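/- Let θ, γ ∈ [0, π/2] with γ ≤ θ, and let A = 1/2 + (1/2)√((cos²γ − cos²θ)/(1 − cos²θ)) (assuming θ > 0). Define K₁ = [[√(A/2), √((1−A)/2)], [√(A/2), −√((1−A)/2)]] and K₂ = [[−√((1−A)/2), √(A/2)], [√((1−A)/2), √(A/2)]]. Then K₁†K₁ + K₂†K₂ = I, and for |ψ⟩ = (1/√2)(e^{iθ/2}, e^{−iθ/2})^T, the normalized post-measurement states √2 K₁|ψ⟩ and √2 K₂|ψ⟩ both satisfy τ = 1 − cos γ. -/

import Mathlib

open Complex Matrix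

/-- The time-reversal frameness monotone `τ(φ) = 1 - |⟨φ*|φ⟩| = 1 - |φ₀² + φ₁²|`. -/
noncomputable def tau (φ : Fin 2 → ℂ) : ℝ := 1 - ‖φ 0 ^ 2 + φ 1 ^ 2‖

/-- The standard state `|ψ_θ⟩ = (1/√2)(e^{iθ/2}, e^{-iθ/2})ᵀ`. -/
noncomputable def stdState (θ : ℝ) : Fin 2 → ℂ := fun i =>
  if i = 0 then Complex.exp (Complex.I * (θ : ℂ) / 2) / (Real.sqrt 2 : ℂ)
  else Complex.exp (-(Complex.I * (θ : ℂ)) / 2) / (Real.sqrt 2 : ℂ)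

/-!
For a real `K`, the quantity `φ₀² + φ₁²` entering `τ` is the bilinear form `φᵀφ`, so for
`φ = √2 K ψ_θ` it only sees the Gram matrix `KᵀK`. Both Kraus operators have diagonal Gram
matrices, `diag(A, 1 - A)` and `diag(1 - A, A)`, which gives
`φ₀² + φ₁² = A e^{± iθ} + (1 - A) e^{∓ iθ} = cos θ ± i (2A - 1) sin θ`.
The value of `A` is chosen exactly so that `cos² θ + (2A - 1)² sin² θ = cos² γ`.
-/

lemma tau_eq_one_sub_sqrt {φ : Fin 2 → ℂ} {x y : ℝ} (h : φ 0 ^ 2 + φ 1 ^ 2 = x + y * I) :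
    tau φ = 1 - √(x ^ 2 + y ^ 2) := by
  rw [tau, h, norm_add_mul_I]

lemma sqrt_two_smul_mulVec_stdState_apply (K : Matrix (Fin 2) (Fin 2) ℝ) (θ : ℝ) (i : Fin 2) :
    ((√2 : ℂ) • (K.map ofReal) *ᵥ stdState θ) i =
      K i 0 * exp (I * θ / 2) + K i 1 * exp (-(I * θ) / 2) := by
  have h2 : (√2 : ℂ) ≠ 0 := by exact_mod_cast (Real.sqrt_pos.mpr two_pos).ne'
  simp only [Pi.smul_apply, mulVec, dotProduct, Fin.sum_univ_two, map_apply, stdState,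
    smul_eq_mul, if_true, one_ne_zero, if_false]
  field_simp

lemma tau_sqrt_two_smul_mulVec_stdState {K : Matrix (Fin 2) (Fin 2) ℝ} {p q : ℝ}
    (hK : Kᵀ * K = diagonal ![p, q]) (θ : ℝ) :
    tau ((√2 : ℂ) • (K.map ofReal) *ᵥ stdState θ) =
      1 - √(((p + q) * Real.cos θ) ^ 2 + ((p - q) * Real.sin θ) ^ 2) := by
  have gram : ∀ i j, K 0 i * K 0 j + K 1 i * K 1 j = diagonal ![p, q] i j := fun i j => by
    simpa [mul_apply, Fin.sum_univ_two] using congr_fun₂ hK i j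
  have hp := gram 0 0
  have hq := gram 1 1
  have hpq := gram 0 1
  simp only [diagonal_apply_eq, diagonal_apply_ne _ zero_ne_one, Matrix.cons_val_zero,
    Matrix.cons_val_one] at hp hq hpq
  apply tau_eq_one_sub_sqrt
  have hE : exp (I * θ / 2) ^ 2 = cos θ + sin θ * I := by
    rw [← exp_nat_mul, show ((2 : ℕ) : ℂ) * (I * θ / 2) = θ * I by push_cast; ring, exp_mul_I]
  have hF : exp (-(I * θ) / 2) ^ 2 = cos θ - sin θ * I := by
    rw [← exp_nat_mul, show ((2 : ℕ) : ℂ) * (-(I * θ) / 2) = -θ * I by push_cast; ring,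
      exp_mul_I, cos_neg, sin_neg, neg_mul, ← sub_eq_add_neg]
  simp only [sqrt_two_smul_mulVec_stdState_apply]
  replace hp := congrArg ofReal hp
  replace hq := congrArg ofReal hq
  replace hpq := congrArg ofReal hpq
  push_cast at hp hq hpq ⊢
  linear_combination exp (I * θ / 2) ^ 2 * hp + exp (-(I * θ) / 2) ^ 2 * hq
    + 2 * exp (I * θ / 2) * exp (-(I * θ) / 2) * hpq + p * hE + q * hF

def kraus₁ (a b : ℝ) : Matrix (Fin 2) (Fin 2) ℝ := !![a, b; a, -b]

def kraus₂ (a b : ℝ) : Matrix (Fin 2) (Fin 2) ℝ := !![-b, a; b, a]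

lemma kraus₁_transpose_mul_self (a b : ℝ) :
    (kraus₁ a b)ᵀ * kraus₁ a b = diagonal ![2 * a ^ 2, 2 * b ^ 2] := by
  ext i j; fin_cases i <;> fin_cases j <;> simp [kraus₁, mul_apply, Fin.sum_univ_two, sq, two_mul]

lemma kraus₂_transpose_mul_self (a b : ℝ) :
    (kraus₂ a b)ᵀ * kraus₂ a b = diagonal ![2 * b ^ 2, 2 * a ^ 2] := by
  ext i j; fin_cases i <;> fin_cases j <;> simp [kraus₂, mul_apply, Fin.sum_univ_two, sq, two_mul]

lemma sub_div_one_sub_mem_Icc {x y : ℝ} (hyx : y ≤ x) (hx : x ≤ 1) :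
    (x - y) / (1 - y) ∈ Set.Icc 0 1 := by
  rcases (sub_nonneg.mpr (hyx.trans hx)).eq_or_lt with hy | hy
  · simp [← hy]
  · exact ⟨div_nonneg (sub_nonneg.mpr hyx) hy.le, (div_le_one hy).mpr (by linarith)⟩

-- At `y = 1` the quotient is the junk value `0`, and the identity survives because then `x = 1`.
lemma add_sub_div_one_sub_mul {x y : ℝ} (hyx : y ≤ x) (hx : x ≤ 1) :
    y + (x - y) / (1 - y) * (1 - y) = x := by
  rcases eq_or_ne (1 - y) 0 with hy | hy
  · rw [hy, mul_zero]; linarith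
  · rw [div_mul_cancel₀ _ hy]; ring

lemma cos_sq_le_cos_sq_of_le {γ θ : ℝ} (hγ : 0 ≤ γ) (hγθ : γ ≤ θ) (hθ : θ ≤ Real.pi / 2) :
    Real.cos θ ^ 2 ≤ Real.cos γ ^ 2 :=
  pow_le_pow_left₀ (Real.cos_nonneg_of_mem_Icc ⟨by linarith [Real.pi_pos], hθ⟩)
    (Real.cos_le_cos_of_nonneg_of_le_pi hγ (by linarith [Real.pi_pos]) hγθ) 2

lemma sqrt_cos_sq_add_sq_mul_sin_sq {θ γ s : ℝ} (hcos : Real.cos θ ^ 2 ≤ Real.cos γ ^ 2)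
    (hγ : 0 ≤ Real.cos γ) (hs : s ^ 2 = (Real.cos γ ^ 2 - Real.cos θ ^ 2) / (1 - Real.cos θ ^ 2)) :
    √(Real.cos θ ^ 2 + (s * Real.sin θ) ^ 2) = Real.cos γ := by
  rw [mul_pow, hs, Real.sin_sq, add_sub_div_one_sub_mul hcos (Real.cos_sq_le_one γ),
    Real.sqrt_sq hγ]

theorem nielsen_measurement_construction
    (θ γ : ℝ) (hθ : θ ∈ Set.Icc 0 (Real.pi / 2)) (hγ : γ ∈ Set.Icc 0 (Real.pi / 2))
    (hγθ : γ ≤ θ)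
    (A : ℝ)
    (hA : A = 1 / 2 + Real.sqrt ((Real.cos γ ^ 2 - Real.cos θ ^ 2) / (1 - Real.cos θ ^ 2)) / 2)
    (K₁ K₂ : Matrix (Fin 2) (Fin 2) ℝ)
    (hK₁ : K₁ = !![Real.sqrt (A / 2), Real.sqrt ((1 - A) / 2);
                   Real.sqrt (A / 2), -Real.sqrt ((1 - A) / 2)])
    (hK₂ : K₂ = !![-Real.sqrt ((1 - A) / 2), Real.sqrt (A / 2);
                   Real.sqrt ((1 - A) / 2), Real.sqrt (A / 2)]) :
    K₁ᵀ * K₁ + K₂ᵀ * K₂ = 1 ∧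
    tau ((Real.sqrt 2 : ℂ) • (K₁.map Complex.ofReal).mulVec (stdState θ)) = 1 - Real.cos γ ∧
    tau ((Real.sqrt 2 : ℂ) • (K₂.map Complex.ofReal).mulVec (stdState θ)) = 1 - Real.cos γ := by
  have hcγ : 0 ≤ Real.cos γ := Real.cos_nonneg_of_mem_Icc ⟨by linarith [hγ.1, Real.pi_pos], hγ.2⟩
  have hcos := cos_sq_le_cos_sq_of_le hγ.1 hγθ hθ.2
  obtain ⟨hr0, hr1⟩ := sub_div_one_sub_mem_Icc hcos (Real.cos_sq_le_one γ)
  set r := (Real.cos γ ^ 2 - Real.cos θ ^ 2) / (1 - Real.cos θ ^ 2)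
  have hAr : (2 * A - 1) ^ 2 = r := by
    rw [hA, show 2 * (1 / 2 + √r / 2) - 1 = √r by ring, Real.sq_sqrt hr0]
  have hA1 : A ≤ 1 := by nlinarith [Real.sqrt_le_one.mpr hr1]
  have hA0 : 0 ≤ A := by rw [hA]; positivity
  have h₁ : (kraus₁ √(A / 2) √((1 - A) / 2))ᵀ * kraus₁ √(A / 2) √((1 - A) / 2) =
      diagonal ![A, 1 - A] := by
    rw [kraus₁_transpose_mul_self, Real.sq_sqrt (by linarith), Real.sq_sqrt (by linarith)]
    ring_nf
  have h₂ : (kraus₂ √(A / 2) √((1 - A) / 2))ᵀ * kraus₂ √(A / 2) √((1 - A) / 2) =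
      diagonal ![1 - A, A] := by
    rw [kraus₂_transpose_mul_self, Real.sq_sqrt (by linarith), Real.sq_sqrt (by linarith)]
    ring_nf
  obtain rfl : K₁ = kraus₁ √(A / 2) √((1 - A) / 2) := hK₁
  obtain rfl : K₂ = kraus₂ √(A / 2) √((1 - A) / 2) := hK₂
  refine ⟨?_, ?_, ?_⟩
  · rw [h₁, h₂, diagonal_add, ← diagonal_one]
    congr 1; ext i; fin_cases i <;> simp
  · rw [tau_sqrt_two_smul_mulVec_stdState h₁, add_sub_cancel, one_mul,
      sqrt_cos_sq_add_sq_mul_sin_sq hcos hcγ (by linear_combination hAr)]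
  · rw [tau_sqrt_two_smul_mulVec_stdState h₂, sub_add_cancel, one_mul,
      sqrt_cos_sq_add_sq_mul_sin_sq hcos hcγ (by linear_combination hAr)]
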